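/- Let n ≥ 2, let I ⊆ ℝ be a nondegenerate interval, and let f = (f_1,…,f_n) satisfy condition (⋆). Then the generalized quasi-arithmetic mean M_f is a mean on I, i.e., for all (x_1,…,x_n) ∈ Iⁿ one has min(x_1,…,x_n) ≤ M_f(x_1,…,x_n) ≤ max(x_1,…,x_n). -/

import Mathlib

/-!
Since the `f k` are monotone in the same sense and never simultaneously constant, `F` is strictly
monotone on `I`, hence injective. With `m = min xᵢ` and `M = max xᵢ`, the value
`∑ k, f k (x k)` lies between `F m` and `F M`, so by the intermediate value theorem it is
`F c` for some `c ∈ [m, M]`, and injectivity forces `M_f(x) = c`.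
-/

open Finset

/-- Condition (⋆): the functions are continuous, monotone in the same sense, and
not simultaneously constant on any nondegenerate subinterval of `I`. -/
def CondStar {n : ℕ} (I : Set ℝ) (f : Fin n → ℝ → ℝ) : Prop :=
  (∀ k, ContinuousOn (f k) I) ∧
  ((∀ k, MonotoneOn (f k) I) ∨ (∀ k, AntitoneOn (f k) I)) ∧
  (∀ a b : ℝ, a ∈ I → b ∈ I → a < b →
    ∃ k, ∃ s ∈ Set.Icc a b, ∃ t ∈ Set.Icc a b, f k s ≠ f k t)

/-- `F = f₁ + ⋯ + fₙ`. -/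
noncomputable def Fsum {n : ℕ} (f : Fin n → ℝ → ℝ) : ℝ → ℝ := fun t => ∑ k, f k t

/-- The generalized quasi-arithmetic mean `M_f(x) = F⁻¹(f₁(x₁) + ⋯ + fₙ(xₙ))`. -/
noncomputable def Mf {n : ℕ} (I : Set ℝ) (f : Fin n → ℝ → ℝ) (x : Fin n → ℝ) : ℝ :=
  Function.invFunOn (Fsum f) I (∑ k, f k (x k))

/-- A mean `M` on `Iⁿ` is `σ`-balanced if for all `x ∈ Iⁿ`, with `u := M x`,
`M (M (u_{σ(1)}(x,u)), …, M (u_{σ(n)}(x,u))) = u`, where `u_k(x,t)` replaces the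
`k`-th coordinate of `x` by `t`. -/
def SigmaBalanced {n : ℕ} (I : Set ℝ) (σ : Equiv.Perm (Fin n))
    (M : (Fin n → ℝ) → ℝ) : Prop :=
  ∀ x : Fin n → ℝ, (∀ k, x k ∈ I) →
    M (fun k => M (Function.update x (σ k) (M x))) = M x

/-- `v_k(x) := M_f(u_k(x, M_f(x)))`. -/
noncomputable def vmap {n : ℕ} (I : Set ℝ) (f : Fin n → ℝ → ℝ) (k : Fin n)
    (x : Fin n → ℝ) : ℝ :=
  Mf I f (Function.update x k (Mf I f x))

theorem Finset.strictMonoOn_sum_of_not_const {ι : Type*} [Fintype ι] {I : Set ℝ}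
    (hI : I.OrdConnected) {f : ι → ℝ → ℝ} (hmono : ∀ k, MonotoneOn (f k) I)
    (hnc : ∀ a b : ℝ, a ∈ I → b ∈ I → a < b →
      ∃ k, ∃ s ∈ Set.Icc a b, ∃ t ∈ Set.Icc a b, f k s ≠ f k t) :
    StrictMonoOn (fun t => ∑ k, f k t) I := by
  intro a ha b hb hab
  obtain ⟨k, s, hs, t, ht, hst⟩ := hnc a b ha hb hab
  have hsub : Set.Icc a b ⊆ I := hI.out ha hb
  refine sum_lt_sum (fun k _ => hmono k ha hb hab.le) ⟨k, mem_univ k, ?_⟩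
  refine (hmono k ha hb hab.le).lt_of_ne fun hab_eq => hst ?_
  have has := hmono k ha (hsub hs) hs.1
  have hsb := hmono k (hsub hs) hb hs.2
  have hat := hmono k ha (hsub ht) ht.1
  have htb := hmono k (hsub ht) hb ht.2
  linarith

theorem injOn_Fsum {n : ℕ} {I : Set ℝ} (hI : I.OrdConnected) {f : Fin n → ℝ → ℝ}
    (hf : CondStar I f) : I.InjOn (Fsum f) := by
  show I.InjOn fun t => ∑ k, f k t
  obtain ⟨-, hmono | hanti, hnc⟩ := hf
  · exact (strictMonoOn_sum_of_not_const hI hmono hnc).injOn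
  · have hneg : StrictMonoOn (fun t => ∑ k, -f k t) I :=
      strictMonoOn_sum_of_not_const (f := fun k t => -f k t) hI (fun k => (hanti k).neg)
        fun a b ha hb hab => by
          obtain ⟨k, s, hs, t, ht, hst⟩ := hnc a b ha hb hab
          exact ⟨k, s, hs, t, ht, fun h => hst (neg_injective h)⟩
    simp only [sum_neg_distrib] at hneg
    simpa using hneg.neg.injOn

theorem sum_apply_mem_uIcc {ι : Type*} [Fintype ι] {I : Set ℝ} {f : ι → ℝ → ℝ}
    (hmono : (∀ k, MonotoneOn (f k) I) ∨ (∀ k, AntitoneOn (f k) I))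
    {a b : ℝ} (ha : a ∈ I) (hb : b ∈ I) {x : ι → ℝ} (hxI : ∀ k, x k ∈ I)
    (hx : ∀ k, x k ∈ Set.Icc a b) :
    ∑ k, f k (x k) ∈ Set.uIcc (∑ k, f k a) (∑ k, f k b) := by
  rcases hmono with hmono | hanti
  · exact Set.mem_uIcc.2 <| .inl
      ⟨sum_le_sum fun k _ => hmono k ha (hxI k) (hx k).1,
        sum_le_sum fun k _ => hmono k (hxI k) hb (hx k).2⟩
  · exact Set.mem_uIcc.2 <| .inr
      ⟨sum_le_sum fun k _ => hanti k (hxI k) hb (hx k).2,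
        sum_le_sum fun k _ => hanti k ha (hxI k) (hx k).1⟩

theorem invFunOn_mem_uIcc {g : ℝ → ℝ} {I : Set ℝ} (hI : I.OrdConnected)
    (hg : ContinuousOn g I) (hinj : I.InjOn g) {a b y : ℝ} (ha : a ∈ I) (hb : b ∈ I)
    (hy : y ∈ Set.uIcc (g a) (g b)) : Function.invFunOn g I y ∈ Set.uIcc a b := by
  have hsub : Set.uIcc a b ⊆ I := hI.uIcc_subset ha hb
  obtain ⟨c, hc, rfl⟩ := intermediate_value_uIcc (hg.mono hsub) hy
  rwa [hinj.leftInvOn_invFunOn (hsub hc)]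

/-- `M_f` is a mean on `I`:
`min(x_1,…,x_n) ≤ M_f(x) ≤ max(x_1,…,x_n)` for all `x ∈ Iⁿ`. -/
theorem stmt16 {n : ℕ} (hn : 2 ≤ n) (I : Set ℝ) (hI : I.OrdConnected)
    (f : Fin n → ℝ → ℝ) (hf : CondStar I f) :
    ∀ x : Fin n → ℝ, (∀ k, x k ∈ I) →
      Finset.univ.inf' ⟨⟨0, by omega⟩, Finset.mem_univ _⟩ x ≤ Mf I f x ∧
        Mf I f x ≤ Finset.univ.sup' ⟨⟨0, by omega⟩, Finset.mem_univ _⟩ x := by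
  intro x hx
  have huniv : (univ : Finset (Fin n)).Nonempty := ⟨⟨0, by omega⟩, mem_univ _⟩
  set m := univ.inf' huniv x
  set M := univ.sup' huniv x
  have hmI : m ∈ I := by
    obtain ⟨i, -, hi⟩ := exists_mem_eq_inf' huniv x
    exact (show m = x i from hi) ▸ hx i
  have hMI : M ∈ I := by
    obtain ⟨i, -, hi⟩ := exists_mem_eq_sup' huniv x
    exact (show M = x i from hi) ▸ hx i
  have hxmM : ∀ k, x k ∈ Set.Icc m M := fun k =>
    ⟨inf'_le x (mem_univ k), le_sup' x (mem_univ k)⟩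
  have hmM : m ≤ M := (hxmM ⟨0, by omega⟩).1.trans (hxmM _).2
  have hcont : ContinuousOn (Fsum f) I := continuousOn_finsetSum _ fun k _ => hf.1 k
  rw [← Set.mem_Icc, ← Set.uIcc_of_le hmM]
  exact invFunOn_mem_uIcc hI hcont (injOn_Fsum hI hf) hmI hMI
    (sum_apply_mem_uIcc hf.2.1 hmI hMI hx hxmM)
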